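/- Let A be a semilocal Dedekind domain with maximal ideals 𝔪₁,…,𝔪ᵣ, s ∈ 𝔪₁⋯𝔪ᵣ nonzero, K the fraction field of A, and 𝒱 a set of normalized discrete valuations on K containing none of the valuations v₁,…,vᵣ attached to 𝔪₁,…,𝔪ᵣ. Then Qₙ(A,𝒱,s) modulo units of A is the free abelian monoid generated by the irreducible polynomials in Qₙ(A,𝒱,s) with leading coefficient 1. Concretely: every f ∈ Qₙ(A,𝒱,s) can be written as f = u·p₁⋯p_k with u ∈ A^× and p₁,…,p_k polynomials that are irreducible in A[t₁,…,tₙ], belong to Qₙ(A,𝒱,s), and have top coefficient 1; and the multiset {p₁,…,p_k} is uniquely determined by f. Conversely, any such product u·p₁⋯p_k lies in Qₙ(A,𝒱,s). -/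

import Mathlib

/-!
Since `A` is a principal ideal domain, `A[t₁,…,tₙ]` is factorial, and the top coefficient of a
product is the product of the top coefficients. So once `Qₙ` is known to be closed under products
and under taking factors, the theorem is unique factorization with each irreducible factor scaled
to have top coefficient `1`.

Closure under factors is a Gauss lemma. For a valuation `w` on `A` and weights `cᵢ`, the weighted
Gauss valuation `maxₜ w(aₜ) ∏ cᵢ ^ tᵢ` is multiplicative, and the top coefficient of any polynomial
bounds it from below. Condition (Q2.5) says that for `v ∈ 𝒱` the Gauss valuation of `f` is attained
at the top coefficient; condition (Q1) in the variable `tⱼ` says the same, for every prime `𝔭`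
of `A`, for `v_𝔭` with `tⱼ` given weight `v_𝔭(s)`. If this holds for `f * g`, multiplicativity
forces it for `f` and for `g`.
-/

open MvPolynomial

/-- The multi-index `(N₁, …, Nₙ)` of the top coefficient of `f`, where
`Nⱼ = deg_{tⱼ} f`. -/
noncomputable def topDeg {A : Type*} [CommSemiring A] {σ : Type*} [Fintype σ]
    (f : MvPolynomial σ A) : σ →₀ ℕ :=
  Finsupp.equivFunOnFinite.symm fun j => degreeOf j f

/-- Membership in `Qₙ(A, 𝒱, s)`: `f` is nonzero and satisfies (Q1), (Q2), (Q2.5), (Q3). -/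
def memQ {A : Type*} [CommRing A] [IsDomain A] {K : Type*} [Field K] [Algebra A K]
    [IsFractionRing A K] (𝒱 : Set (Valuation K (WithZero (Multiplicative ℤ)))) (s : A)
    {n : ℕ} (f : MvPolynomial (Fin n) A) : Prop :=
  f ≠ 0 ∧
  (∀ d : Fin n →₀ ℕ, s ^ (Finset.univ.sup fun j => degreeOf j f - d j) ∣ coeff d f) ∧
  IsUnit (coeff (topDeg f) f) ∧
  (∀ v ∈ 𝒱, ∀ d : Fin n →₀ ℕ,
    v (algebraMap A K (coeff d f)) ≤ v (algebraMap A K (coeff (topDeg f) f))) ∧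
  (∀ j : Fin n,
    MvPolynomial.eval₂ (MvPolynomial.C : A →+* MvPolynomial (Fin n) A)
      (fun i => if i = j then 0 else X i) f ≠ 0)


namespace Finsupp

variable {σ M : Type*}

lemma prod_pow_add [CommMonoid M] (c : σ → M) (t u : σ →₀ ℕ) :
    (t + u).prod (c · ^ ·) = t.prod (c · ^ ·) * u.prod (c · ^ ·) :=
  prod_add_index' (fun i => pow_zero (c i)) fun i => pow_add (c i)

lemma prod_pow_ne_zero [CommMonoidWithZero M] [NoZeroDivisors M] [Nontrivial M] {c : σ → M}
    (hc : ∀ i, c i ≠ 0) (t : σ →₀ ℕ) : t.prod (c · ^ ·) ≠ 0 :=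
  Finset.prod_ne_zero_iff.2 fun i _ => pow_ne_zero _ (hc i)

lemma prod_pow_mulSingle [CommMonoid M] [DecidableEq σ] (j : σ) (x : M) (t : σ →₀ ℕ) :
    t.prod ((Pi.mulSingle j x : σ → M) · ^ ·) = x ^ t j := by
  simp only [Finsupp.prod, Pi.mulSingle_apply, ite_pow, one_pow, Finset.prod_ite_eq']
  split_ifs with h
  · rfl
  · rw [notMem_support_iff.1 h, pow_zero]

lemma toLex_lt_or_toLex_lt_of_add_eq [LinearOrder σ] {t u x y : σ →₀ ℕ} (hsum : x + y = t + u)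
    (hne : (x, y) ≠ (t, u)) : toLex t < toLex x ∨ toLex u < toLex y := by
  by_contra! h
  have := (add_eq_add_iff_eq_and_eq h.1 h.2).1 (congrArg toLex hsum)
  exact hne (Prod.ext (toLex.injective this.1) (toLex.injective this.2))

end Finsupp

lemma pow_finset_sup_dvd_iff {M ι : Type*} [Monoid M] (s : M) (I : Finset ι) (φ : ι → ℕ)
    (x : M) : s ^ I.sup φ ∣ x ↔ ∀ i ∈ I, s ^ φ i ∣ x := by
  refine ⟨fun h i hi => (pow_dvd_pow s (Finset.le_sup hi)).trans h, fun h => ?_⟩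
  rcases I.eq_empty_or_nonempty with rfl | hI
  · simp
  · obtain ⟨i, hi, hsup⟩ := I.exists_mem_eq_sup hI φ
    exact hsup ▸ h i hi

lemma IsDedekindDomain.dvd_of_forall_intValuation_le {A : Type*} [CommRing A]
    [IsDedekindDomain A] {a b : A} (hb : b ≠ 0)
    (h : ∀ P : HeightOneSpectrum A, P.intValuation a ≤ P.intValuation b) : b ∣ a := by
  let K := FractionRing A
  have hbK : algebraMap A K b ≠ 0 := (map_ne_zero_iff _ (IsFractionRing.injective A K)).2 hb
  obtain ⟨c, hc⟩ := HeightOneSpectrum.mem_integers_of_valuation_le_one K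
    (algebraMap A K a / algebraMap A K b) fun P => by
      rw [map_div₀, P.valuation_of_algebraMap, P.valuation_of_algebraMap,
        div_le_one₀ (zero_lt_iff.2 (P.intValuation_ne_zero b hb))]
      exact h P
  refine ⟨c, IsFractionRing.injective A K ?_⟩
  rw [map_mul, hc, mul_div_cancel₀ _ hbK]

namespace MvPolynomial

section GaussValuation

open Finset.HasAntidiagonal Finsupp

variable {R Γ₀ σ : Type*} [CommRing R] [LinearOrderedCommGroupWithZero Γ₀]

noncomputable def gaussVal (v : Valuation R Γ₀) (c : σ → Γ₀) (F : MvPolynomial σ R) : Γ₀ :=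
  F.support.sup fun t => v (coeff t F) * t.prod (c · ^ ·)

variable {v : Valuation R Γ₀} {c : σ → Γ₀}

@[simp]
lemma gaussVal_zero : gaussVal v c (0 : MvPolynomial σ R) = 0 := by
  simp [gaussVal, bot_eq_zero]

lemma le_gaussVal (F : MvPolynomial σ R) (t : σ →₀ ℕ) :
    v (coeff t F) * t.prod (c · ^ ·) ≤ gaussVal v c F := by
  by_cases ht : t ∈ F.support
  · exact Finset.le_sup (f := fun t => v (coeff t F) * t.prod (c · ^ ·)) ht
  · simp [notMem_support_iff.1 ht]

lemma gaussVal_le {F : MvPolynomial σ R} {a : Γ₀}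
    (h : ∀ t, v (coeff t F) * t.prod (c · ^ ·) ≤ a) : gaussVal v c F ≤ a :=
  Finset.sup_le fun t _ => h t

lemma gaussVal_ne_zero (hv : ∀ x, v x = 0 → x = 0) (hc : ∀ i, c i ≠ 0)
    {F : MvPolynomial σ R} (hF : F ≠ 0) : gaussVal v c F ≠ 0 := by
  obtain ⟨t, ht⟩ := ne_zero_iff.1 hF
  have hpos : 0 < v (coeff t F) * t.prod (c · ^ ·) :=
    zero_lt_iff.2 (mul_ne_zero (fun h => ht (hv _ h)) (prod_pow_ne_zero hc t))
  exact (hpos.trans_le (le_gaussVal F t)).ne'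

lemma gaussVal_mul_le (hc : ∀ i, c i ≠ 0) (F G : MvPolynomial σ R) :
    gaussVal v c (F * G) ≤ gaussVal v c F * gaussVal v c G := by
  classical
  refine gaussVal_le fun t => ?_
  have hω := zero_lt_iff.2 (prod_pow_ne_zero hc t)
  rw [← le_div_iff₀ hω, coeff_mul]
  refine v.map_sum_le fun p hp => ?_
  rw [le_div_iff₀ hω, ← mem_antidiagonal.1 hp, prod_pow_add, map_mul, mul_mul_mul_comm]
  exact mul_le_mul' (le_gaussVal F p.1) (le_gaussVal G p.2)

lemma exists_lex_max_gaussVal [LinearOrder σ] (hv : ∀ x, v x = 0 → x = 0) (hc : ∀ i, c i ≠ 0)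
    {F : MvPolynomial σ R} (hF : F ≠ 0) :
    ∃ t, v (coeff t F) * t.prod (c · ^ ·) = gaussVal v c F ∧
      ∀ t', toLex t < toLex t' → v (coeff t' F) * t'.prod (c · ^ ·) < gaussVal v c F := by
  classical
  set S := F.support.filter fun t => v (coeff t F) * t.prod (c · ^ ·) = gaussVal v c F
  have hS : S.Nonempty := by
    obtain ⟨t, ht, hmax⟩ := Finset.exists_mem_eq_sup F.support (support_nonempty.2 hF)
      fun t => v (coeff t F) * t.prod (c · ^ ·)
    exact ⟨t, Finset.mem_filter.2 ⟨ht, hmax.symm⟩⟩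
  obtain ⟨t, htS, hmax⟩ := S.exists_max_image toLex hS
  refine ⟨t, (Finset.mem_filter.1 htS).2, fun t' ht' => (le_gaussVal F t').lt_of_ne fun heq => ?_⟩
  have ht'F : t' ∈ F.support := by
    refine mem_support_iff.2 fun h0 => gaussVal_ne_zero hv hc hF ?_
    rw [← heq, h0, map_zero, zero_mul]
  exact (hmax t' (Finset.mem_filter.2 ⟨ht'F, heq⟩)).not_gt ht'

theorem gaussVal_mul [LinearOrder σ] (hv : ∀ x, v x = 0 → x = 0) (hc : ∀ i, c i ≠ 0)
    {F G : MvPolynomial σ R} (hF : F ≠ 0) (hG : G ≠ 0) :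
    gaussVal v c (F * G) = gaussVal v c F * gaussVal v c G := by
  classical
  refine le_antisymm (gaussVal_mul_le hc F G) ?_
  -- the product of the lex-largest extremal terms of `F` and `G` is not cancelled in `F * G`
  obtain ⟨t, ht, htmax⟩ := exists_lex_max_gaussVal hv hc hF
  obtain ⟨u, hu, humax⟩ := exists_lex_max_gaussVal hv hc hG
  have hFpos := zero_lt_iff.2 (gaussVal_ne_zero hv hc hF)
  have hGpos := zero_lt_iff.2 (gaussVal_ne_zero hv hc hG)
  have hdom : ∀ p ∈ antidiagonal (t + u) \ {(t, u)},
      v (coeff p.1 F * coeff p.2 G) < v (coeff t F * coeff u G) := by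
    rintro ⟨x, y⟩ hp
    obtain ⟨hxy, hne⟩ := Finset.mem_sdiff.1 hp
    rw [← mul_lt_mul_iff_left₀ (zero_lt_iff.2 (prod_pow_ne_zero hc (t + u)))]
    nth_rewrite 1 [← mem_antidiagonal.1 hxy]
    rw [prod_pow_add, map_mul, map_mul, mul_mul_mul_comm (v _), prod_pow_add,
      mul_mul_mul_comm (v (coeff t F)), ht, hu]
    rcases toLex_lt_or_toLex_lt_of_add_eq (mem_antidiagonal.1 hxy)
      (Finset.notMem_singleton.1 hne) with hx | hy
    · exact mul_lt_mul_of_lt_of_le_of_nonneg_of_pos (htmax x hx) (le_gaussVal G y) zero_le hGpos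
    · exact mul_lt_mul_of_le_of_lt_of_nonneg_of_pos (le_gaussVal F x) (humax y hy) zero_le hFpos
  calc gaussVal v c F * gaussVal v c G
      = v (coeff t F * coeff u G) * (t + u).prod (c · ^ ·) := by
        rw [← ht, ← hu, map_mul, prod_pow_add, mul_mul_mul_comm]
    _ = v (coeff (t + u) (F * G)) * (t + u).prod (c · ^ ·) := by
        rw [coeff_mul, v.map_sum_eq_of_lt (f := fun p => coeff p.1 F * coeff p.2 G)
          (j := (t, u)) (mem_antidiagonal.2 rfl) hdom]
    _ ≤ gaussVal v c (F * G) := le_gaussVal _ _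

theorem gaussVal_le_of_mul_le [LinearOrder σ] (hv : ∀ x, v x = 0 → x = 0) (hc : ∀ i, c i ≠ 0)
    {F G : MvPolynomial σ R} {a b : Γ₀} (hb : b ≤ gaussVal v c G) (hb0 : b ≠ 0)
    (h : gaussVal v c (F * G) ≤ a * b) : gaussVal v c F ≤ a := by
  rcases eq_or_ne F 0 with rfl | hF
  · simp
  have hG : G ≠ 0 := by
    rintro rfl
    exact hb0 (le_antisymm (hb.trans_eq gaussVal_zero) zero_le)
  rw [← mul_le_mul_iff_left₀ (zero_lt_iff.2 hb0)]
  calc gaussVal v c F * b ≤ gaussVal v c F * gaussVal v c G := mul_le_mul_right hb _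
    _ = gaussVal v c (F * G) := (gaussVal_mul hv hc hF hG).symm
    _ ≤ a * b := h

end GaussValuation

lemma pow_dvd_coeff_mul {R σ : Type*} [CommSemiring R] {s : R} {f g : MvPolynomial σ R} (j : σ)
    (hf : ∀ t, s ^ (degreeOf j f - t j) ∣ coeff t f)
    (hg : ∀ t, s ^ (degreeOf j g - t j) ∣ coeff t g) (t : σ →₀ ℕ) :
    s ^ (degreeOf j (f * g) - t j) ∣ coeff t (f * g) := by
  classical
  rw [coeff_mul]
  refine Finset.dvd_sum fun p hp => ?_
  have htj : p.1 j + p.2 j = t j := by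
    rw [← Finset.HasAntidiagonal.mem_antidiagonal.1 hp, Finsupp.add_apply]
  have hle : degreeOf j (f * g) - t j ≤ (degreeOf j f - p.1 j) + (degreeOf j g - p.2 j) := by
    have := degreeOf_mul_le j f g
    omega
  exact (pow_dvd_pow s hle).trans (pow_add s _ _ ▸ mul_dvd_mul (hf p.1) (hg p.2))

lemma val_coeff_mul_le {R σ Γ₀ : Type*} [CommRing R] [LinearOrderedCommGroupWithZero Γ₀]
    {v : Valuation R Γ₀} {f g : MvPolynomial σ R} {a b : Γ₀} (hf : ∀ t, v (coeff t f) ≤ a)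
    (hg : ∀ t, v (coeff t g) ≤ b) (t : σ →₀ ℕ) : v (coeff t (f * g)) ≤ a * b := by
  classical
  rw [coeff_mul]
  exact v.map_sum_le fun p _ => (v.map_mul _ _).trans_le (mul_le_mul' (hf p.1) (hg p.2))

end MvPolynomial

section TopDegree

variable {A σ : Type*} [CommRing A] [Fintype σ]

lemma topDeg_apply (f : MvPolynomial σ A) (j : σ) : topDeg f j = degreeOf j f := rfl

lemma topDeg_C (a : A) : topDeg (C a : MvPolynomial σ A) = 0 :=
  Finsupp.ext fun j => degreeOf_C a j

lemma le_topDeg {f : MvPolynomial σ A} {t : σ →₀ ℕ} (ht : coeff t f ≠ 0) : t ≤ topDeg f :=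
  fun i => monomial_le_degreeOf i (mem_support_iff.2 ht)

lemma coeff_topDeg_add_topDeg_mul (f g : MvPolynomial σ A) :
    coeff (topDeg f + topDeg g) (f * g) = coeff (topDeg f) f * coeff (topDeg g) g := by
  classical
  rw [coeff_mul, Finset.sum_eq_single_of_mem (topDeg f, topDeg g)
    (Finset.HasAntidiagonal.mem_antidiagonal.2 rfl)]
  rintro ⟨x, y⟩ hxy hne
  by_contra h
  refine hne (Prod.ext_iff.2 ((add_eq_add_iff_eq_and_eq ?_ ?_).1
    (Finset.HasAntidiagonal.mem_antidiagonal.1 hxy)))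
  · exact le_topDeg (left_ne_zero_of_mul h)
  · exact le_topDeg (right_ne_zero_of_mul h)

variable [IsDomain A]

lemma topDeg_mul {f g : MvPolynomial σ A} (hf : f ≠ 0) (hg : g ≠ 0) :
    topDeg (f * g) = topDeg f + topDeg g :=
  Finsupp.ext fun _ => degreeOf_mul_eq hf hg

lemma coeff_topDeg_mul {f g : MvPolynomial σ A} (hf : f ≠ 0) (hg : g ≠ 0) :
    coeff (topDeg (f * g)) (f * g) = coeff (topDeg f) f * coeff (topDeg g) g := by
  rw [topDeg_mul hf hg, coeff_topDeg_add_topDeg_mul]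

lemma topDeg_C_mul {a : A} (ha : a ≠ 0) (f : MvPolynomial σ A) : topDeg (C a * f) = topDeg f :=
  Finsupp.ext fun j => degreeOf_C_mul j a (mem_nonZeroDivisors_of_ne_zero ha)

lemma coeff_topDeg_C_mul {a : A} (ha : a ≠ 0) (f : MvPolynomial σ A) :
    coeff (topDeg (C a * f)) (C a * f) = a * coeff (topDeg f) f := by
  rw [topDeg_C_mul ha, coeff_C_mul]

lemma eq_of_associated_of_coeff_topDeg_eq_one {p q : MvPolynomial σ A} (hpq : Associated p q)
    (hp : coeff (topDeg p) p = 1) (hq : coeff (topDeg q) q = 1) : p = q := by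
  obtain ⟨e, rfl⟩ := hpq.symm
  obtain ⟨r, hr, he⟩ := isUnit_iff_eq_C_of_isReduced.1 e.isUnit
  rw [he, mul_comm, coeff_topDeg_C_mul hr.ne_zero, hq, mul_one] at hp
  rw [he, hp, map_one, mul_one]

end TopDegree

section TopCoefficient

open IsDedekindDomain

variable {A σ : Type*} [CommRing A] [Fintype σ] [LinearOrder σ]

theorem val_coeff_le_of_mul {Γ₀ : Type*} [LinearOrderedCommGroupWithZero Γ₀] {v : Valuation A Γ₀}
    (hv : ∀ x, v x = 0 → x = 0) {f g : MvPolynomial σ A} (hg : coeff (topDeg g) g ≠ 0)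
    (hfg : ∀ t, v (coeff t (f * g)) ≤ v (coeff (topDeg f) f) * v (coeff (topDeg g) g))
    (t : σ →₀ ℕ) : v (coeff t f) ≤ v (coeff (topDeg f) f) := by
  have hω : ∀ u : σ →₀ ℕ, u.prod ((1 : σ → Γ₀) · ^ ·) = 1 := by simp [Finsupp.prod]
  have hG : v (coeff (topDeg g) g) ≤ gaussVal v 1 g := by
    simpa [hω] using le_gaussVal (v := v) (c := 1) g (topDeg g)
  have hFG : gaussVal v 1 (f * g) ≤ v (coeff (topDeg f) f) * v (coeff (topDeg g) g) :=
    gaussVal_le fun u => by rw [hω, mul_one]; exact hfg u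
  simpa [hω] using (le_gaussVal f t).trans
    (gaussVal_le_of_mul_le hv (fun _ => one_ne_zero) hG (fun h => hg (hv _ h)) hFG)

theorem val_coeff_mul_pow_le_of_mul {Γ₀ : Type*} [LinearOrderedCommGroupWithZero Γ₀]
    {v : Valuation A Γ₀} (hv : ∀ x, v x = 0 → x = 0) {x : Γ₀} (hx : x ≠ 0) (j : σ)
    {f g : MvPolynomial σ A} (hg : v (coeff (topDeg g) g) = 1)
    (hfg : ∀ u, v (coeff u (f * g)) * x ^ u j ≤ x ^ (degreeOf j f + degreeOf j g))
    (t : σ →₀ ℕ) : v (coeff t f) * x ^ t j ≤ x ^ degreeOf j f := by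
  classical
  have hc : ∀ i, (Pi.mulSingle j x : σ → Γ₀) i ≠ 0 := fun i => by
    by_cases h : i = j <;> simp [h, hx]
  have hG : x ^ degreeOf j g ≤ gaussVal v (Pi.mulSingle j x) g := by
    have := le_gaussVal (v := v) (c := Pi.mulSingle j x) g (topDeg g)
    rwa [Finsupp.prod_pow_mulSingle, topDeg_apply, hg, one_mul] at this
  have hFG : gaussVal v (Pi.mulSingle j x) (f * g) ≤ x ^ degreeOf j f * x ^ degreeOf j g :=
    gaussVal_le fun u => by rw [Finsupp.prod_pow_mulSingle, ← pow_add]; exact hfg u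
  have := (le_gaussVal f t).trans (gaussVal_le_of_mul_le hv hc hG (pow_ne_zero _ hx) hFG)
  rwa [Finsupp.prod_pow_mulSingle] at this

variable [IsDedekindDomain A]

theorem pow_dvd_coeff_of_mul {s : A} (hs : s ≠ 0) {f g : MvPolynomial σ A} (j : σ)
    (hg : IsUnit (coeff (topDeg g) g))
    (hfg : ∀ t, s ^ (degreeOf j f + degreeOf j g - t j) ∣ coeff t (f * g)) (t : σ →₀ ℕ) :
    s ^ (degreeOf j f - t j) ∣ coeff t f := by
  rcases eq_or_ne (coeff t f) 0 with h0 | ht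
  · simp [h0]
  refine dvd_of_forall_intValuation_le (pow_ne_zero _ hs) fun P => ?_
  have hws := P.intValuation_ne_zero s hs
  have hval_pow_dvd : ∀ {k a}, s ^ k ∣ a → P.intValuation a ≤ P.intValuation s ^ k := by
    rintro k a ⟨b, rfl⟩
    rw [map_mul, map_pow]
    exact mul_le_of_le_one_right' (P.intValuation_le_one b)
  have hunit : P.intValuation (coeff (topDeg g) g) = 1 := HeightOneSpectrum.intValuation_eq_one_iff.2
    fun hmem => P.isPrime.ne_top (Ideal.eq_top_of_isUnit_mem _ hmem hg)
  have key := val_coeff_mul_pow_le_of_mul (f := f)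
    (fun a ha => by_contra fun ha0 => P.intValuation_ne_zero a ha0 ha) hws j hunit (fun u => ?_) t
  · have htj : t j ≤ degreeOf j f := le_topDeg ht j
    rwa [← pow_sub_mul_pow _ htj,
      mul_le_mul_iff_left₀ (zero_lt_iff.2 (pow_ne_zero _ hws)), ← map_pow] at key
  · rcases eq_or_ne (coeff u (f * g)) 0 with hu0 | hu
    · simp [hu0]
    rw [← pow_sub_mul_pow _ ((le_topDeg hu j).trans (degreeOf_mul_le j f g))]
    exact mul_le_mul_left (hval_pow_dvd (hfg u)) _

end TopCoefficient

section Membership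

variable {A : Type*} [CommRing A] {K : Type*} [Field K] [Algebra A K] [IsFractionRing A K]
  {𝒱 : Set (Valuation K (WithZero (Multiplicative ℤ)))} {s : A} {n : ℕ}

section Domain

variable [IsDomain A]

lemma memQ_C {u : A} (hu : IsUnit u) : memQ 𝒱 s (C u : MvPolynomial (Fin n) A) := by
  refine ⟨C_ne_zero.2 hu.ne_zero,
    fun d => (pow_finset_sup_dvd_iff _ _ _ _).2 fun j _ => by simp [degreeOf_C],
    by simpa [topDeg_C] using hu, fun v _ d => ?_, fun j => by simpa using hu.ne_zero⟩
  rw [topDeg_C, coeff_C, coeff_C, if_pos rfl]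
  split_ifs <;> simp

lemma memQ_mul {f g : MvPolynomial (Fin n) A} (hf : memQ 𝒱 s f) (hg : memQ 𝒱 s g) :
    memQ 𝒱 s (f * g) := by
  obtain ⟨hf0, hf1, hf2, hf25, hf3⟩ := hf
  obtain ⟨hg0, hg1, hg2, hg25, hg3⟩ := hg
  have htop := coeff_topDeg_mul hf0 hg0
  refine ⟨mul_ne_zero hf0 hg0, fun d => ?_, htop ▸ hf2.mul hg2, fun v hv d => ?_,
    fun j => by simpa [eval₂_mul] using mul_ne_zero (hf3 j) (hg3 j)⟩
  · simp only [pow_finset_sup_dvd_iff, Finset.mem_univ, forall_const] at hf1 hg1 ⊢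
    exact fun j => pow_dvd_coeff_mul j (fun t => hf1 t j) (fun t => hg1 t j) d
  · rw [htop, map_mul, map_mul]
    exact val_coeff_mul_le (v := v.comap (algebraMap A K)) (hf25 v hv) (hg25 v hv) d

lemma memQ_C_mul_prod {u : A} (hu : IsUnit u) {P : Multiset (MvPolynomial (Fin n) A)}
    (hP : ∀ p ∈ P, memQ 𝒱 s p) : memQ 𝒱 s (C u * P.prod) := by
  induction P using Multiset.induction_on with
  | empty => simpa using memQ_C hu
  | cons p P ih =>
    rw [Multiset.prod_cons, mul_left_comm]
    exact memQ_mul (hP p (Multiset.mem_cons_self p P))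
      (ih fun q hq => hP q (Multiset.mem_cons_of_mem hq))

end Domain

variable [IsDedekindDomain A]

theorem memQ_of_mul_left (hs : s ≠ 0) {f g : MvPolynomial (Fin n) A} (h : memQ 𝒱 s (f * g)) :
    memQ 𝒱 s f := by
  obtain ⟨hfg0, hQ1, hQ2, hQ25, hQ3⟩ := h
  have hf0 : f ≠ 0 := left_ne_zero_of_mul hfg0
  have hg0 : g ≠ 0 := right_ne_zero_of_mul hfg0
  have htop := coeff_topDeg_mul hf0 hg0
  rw [htop] at hQ2 hQ25
  have hg2 := isUnit_of_mul_isUnit_right hQ2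
  refine ⟨hf0, fun d => ?_, isUnit_of_mul_isUnit_left hQ2, fun v hv d => ?_,
    fun j => left_ne_zero_of_mul (by simpa [eval₂_mul] using hQ3 j)⟩
  · simp only [pow_finset_sup_dvd_iff, Finset.mem_univ, forall_const] at hQ1 ⊢
    refine fun j => pow_dvd_coeff_of_mul hs j hg2 (fun t => ?_) d
    simpa [degreeOf_mul_eq hf0 hg0] using hQ1 t j
  · have hinj : ∀ x, v.comap (algebraMap A K) x = 0 → x = 0 := fun x hx =>
      IsFractionRing.injective A K (by simpa using hx)
    refine val_coeff_le_of_mul hinj hg2.ne_zero (fun t => ?_) d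
    simpa using hQ25 v hv t

lemma memQ_of_dvd (hs : s ≠ 0) {p f : MvPolynomial (Fin n) A} (hpf : p ∣ f) (hf : memQ 𝒱 s f) :
    memQ 𝒱 s p := by
  obtain ⟨q, rfl⟩ := hpf
  exact memQ_of_mul_left hs hf

end Membership

section Factorization

variable {A σ : Type*} [CommRing A] [IsDomain A] [Fintype σ]
  [UniqueFactorizationMonoid (MvPolynomial σ A)]

theorem exists_eq_C_mul_prod_of_isUnit_coeff_topDeg {f : MvPolynomial σ A}
    (hf : IsUnit (coeff (topDeg f) f)) :
    ∃ (u : Aˣ) (P : Multiset (MvPolynomial σ A)),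
      (∀ p ∈ P, Irreducible p ∧ coeff (topDeg p) p = 1) ∧ f = C (u : A) * P.prod := by
  induction f using WfDvdMonoid.induction_on_irreducible with
  | zero => simp at hf
  | unit f hu =>
    obtain ⟨r, hr, rfl⟩ := isUnit_iff_eq_C_of_isReduced.1 hu
    exact ⟨hr.unit, 0, by simp, by simp⟩
  | mul f p hf0 hp ih =>
    rw [coeff_topDeg_mul hp.ne_zero hf0] at hf
    obtain ⟨u, P, hP, rfl⟩ := ih (isUnit_of_mul_isUnit_right hf)
    obtain ⟨a, ha⟩ := isUnit_of_mul_isUnit_left hf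
    refine ⟨a * u, C (↑a⁻¹ : A) * p ::ₘ P, fun q hq => ?_, ?_⟩
    · rcases Multiset.mem_cons.1 hq with rfl | hq
      · refine ⟨(irreducible_isUnit_mul ((a⁻¹).isUnit.map C)).2 hp, ?_⟩
        rw [coeff_topDeg_C_mul (a⁻¹).ne_zero, ← ha, Units.inv_mul]
      · exact hP q hq
    · have hCa : C (a : A) * C (↑a⁻¹ : A) = (1 : MvPolynomial σ A) := by
        rw [← map_mul, Units.mul_inv, map_one]
      rw [Multiset.prod_cons, Units.val_mul, map_mul]
      linear_combination (-(p * C (u : A) * P.prod)) * hCa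

theorem multiset_eq_of_C_mul_prod_eq {u u' : Aˣ} {P P' : Multiset (MvPolynomial σ A)}
    (hP : ∀ p ∈ P, Irreducible p ∧ coeff (topDeg p) p = 1)
    (hP' : ∀ p ∈ P', Irreducible p ∧ coeff (topDeg p) p = 1)
    (h : C (u : A) * P.prod = C (u' : A) * P'.prod) : P = P' := by
  have hassoc : Associated P.prod P'.prod :=
    (associated_unit_mul_left _ _ (u.isUnit.map C)).symm.trans
      (h ▸ associated_unit_mul_left _ _ (u'.isUnit.map C))
  refine Multiset.rel_eq.1 ((UniqueFactorizationMonoid.factors_unique (fun p hp => (hP p hp).1)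
    (fun p hp => (hP' p hp).1) hassoc).mono fun p hp q hq hpq => ?_)
  exact eq_of_associated_of_coeff_topDeg_eq_one hpq (hP p hp).2 (hP' q hq).2

end Factorization

theorem stmt_8_general {A : Type*} [CommRing A] [IsDedekindDomain A]
    (hfin : {I : Ideal A | I.IsMaximal}.Finite)
    {K : Type*} [Field K] [Algebra A K] [IsFractionRing A K]
    (𝒱 : Set (Valuation K (WithZero (Multiplicative ℤ))))
    (s : A) (hs0 : s ≠ 0)
    {n : ℕ} :
    (∀ f : MvPolynomial (Fin n) A, memQ 𝒱 s f →
      ∃ (u : Aˣ) (P : Multiset (MvPolynomial (Fin n) A)),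
        (∀ p ∈ P, Irreducible p ∧ memQ 𝒱 s p ∧ coeff (topDeg p) p = 1) ∧
        f = C (u : A) * P.prod ∧
        (∀ (u' : Aˣ) (P' : Multiset (MvPolynomial (Fin n) A)),
          (∀ p ∈ P', Irreducible p ∧ memQ 𝒱 s p ∧ coeff (topDeg p) p = 1) →
          f = C (u' : A) * P'.prod → P' = P)) ∧
    (∀ (u : Aˣ) (P : Multiset (MvPolynomial (Fin n) A)),
      (∀ p ∈ P, Irreducible p ∧ memQ 𝒱 s p ∧ coeff (topDeg p) p = 1) →
      memQ 𝒱 s (C (u : A) * P.prod)) := by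
  have := IsPrincipalIdealRing.of_finite_maximals hfin
  refine ⟨fun f hf => ?_, fun u P hP => memQ_C_mul_prod u.isUnit fun p hp => (hP p hp).2.1⟩
  obtain ⟨u, P, hP, rfl⟩ := exists_eq_C_mul_prod_of_isUnit_coeff_topDeg hf.2.2.1
  refine ⟨u, P, fun p hp => ⟨(hP p hp).1, ?_, (hP p hp).2⟩, rfl, fun u' P' hP' h => ?_⟩
  · exact memQ_of_dvd hs0 (dvd_mul_of_dvd_right (Multiset.dvd_prod hp) _) hf
  · exact multiset_eq_of_C_mul_prod_eq (fun p hp => ⟨(hP' p hp).1, (hP' p hp).2.2⟩) hP h.symm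

/-- Corollary 5.8.  `Qₙ(A,𝒱,s)` modulo units of `A` is the free abelian
monoid on the irreducible polynomials in `Qₙ(A,𝒱,s)` with leading (top) coefficient `1`:
every `f ∈ Qₙ(A,𝒱,s)` is `u·p₁⋯p_k` with `u ∈ A^×` and the `pᵢ` irreducible, in
`Qₙ(A,𝒱,s)` and with top coefficient `1`, the multiset `{p₁,…,p_k}` being uniquely
determined by `f`; conversely every such product lies in `Qₙ(A,𝒱,s)`. -/
theorem stmt_8 {A : Type*} [CommRing A] [IsDedekindDomain A] (hA : ¬ IsField A)
    (hfin : {I : Ideal A | I.IsMaximal}.Finite)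
    {K : Type*} [Field K] [Algebra A K] [IsFractionRing A K]
    (𝒱 : Set (Valuation K (WithZero (Multiplicative ℤ))))
    (hnorm : ∀ v ∈ 𝒱, Function.Surjective v)
    (hnot : ∀ v ∈ 𝒱, ∀ P : IsDedekindDomain.HeightOneSpectrum A,
      v ≠ P.valuation (K := K))
    (s : A) (hs0 : s ≠ 0) (hs : ∀ m : Ideal A, m.IsMaximal → s ∈ m)
    {n : ℕ} :
    (∀ f : MvPolynomial (Fin n) A, memQ 𝒱 s f →
      ∃ (u : Aˣ) (P : Multiset (MvPolynomial (Fin n) A)),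
        (∀ p ∈ P, Irreducible p ∧ memQ 𝒱 s p ∧ coeff (topDeg p) p = 1) ∧
        f = C (u : A) * P.prod ∧
        (∀ (u' : Aˣ) (P' : Multiset (MvPolynomial (Fin n) A)),
          (∀ p ∈ P', Irreducible p ∧ memQ 𝒱 s p ∧ coeff (topDeg p) p = 1) →
          f = C (u' : A) * P'.prod → P' = P)) ∧
    (∀ (u : Aˣ) (P : Multiset (MvPolynomial (Fin n) A)),
      (∀ p ∈ P, Irreducible p ∧ memQ 𝒱 s p ∧ coeff (topDeg p) p = 1) →
      memQ 𝒱 s (C (u : A) * P.prod)) :=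
  stmt_8_general hfin 𝒱 s hs0
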